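/- The first Lie algebra cohomology of L₆,₃ (with de¹ = e²³, de² = 2e¹², de³ = -2e¹³, de⁴ = e¹⁴+e²⁵+e⁴⁶, de⁵ = -e¹⁵+e³⁴+e⁵⁶, de⁶ = 0) has dimension 1, i.e. the space of closed 1-forms is one-dimensional, spanned by e⁶. -/

import Mathlib

/-!
STATEMENT 13: The first Lie algebra cohomology of L₆,₃
(with de¹ = e²³, de² = 2e¹², de³ = -2e¹³, de⁴ = e¹⁴+e²⁵+e⁴⁶, de⁵ = -e¹⁵+e³⁴+e⁵⁶, de⁶ = 0)
has dimension 1, i.e. the space of closed 1-forms is one-dimensional, spanned by e⁶.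

Model: a 1-form α = Σ aₘ e^m is encoded by its coefficient vector a : Fin 6 → ℝ
(indices shifted to 0,…,5).  Closedness dα = 0 means dα(e_i,e_j) = -α([e_i,e_j]) = 0
for all i,j, i.e. Σ_m a_m · (de^m)(e_i,e_j) = 0 for all i,j.
-/

/-- Value of the 2-form e^a ∧ e^b on the pair of basis vectors (e_i, e_j). -/
def wf (a b i j : Fin 6) : ℝ :=
  (if a = i then (1:ℝ) else 0) * (if b = j then (1:ℝ) else 0) -
  (if a = j then (1:ℝ) else 0) * (if b = i then (1:ℝ) else 0)

/-- Structure equations of L₆,₃. -/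
def dL63 (k i j : Fin 6) : ℝ :=
  if k = 0 then wf 1 2 i j
  else if k = 1 then 2 * wf 0 1 i j
  else if k = 2 then -2 * wf 0 2 i j
  else if k = 3 then wf 0 3 i j + wf 1 4 i j + wf 3 5 i j
  else if k = 4 then -(wf 0 4 i j) + wf 2 3 i j + wf 4 5 i j
  else 0

/-! Evaluating dα on (e₂,e₃), (e₁,e₂), (e₁,e₃), (e₁,e₄), (e₁,e₅) isolates the coefficients of
e¹,…,e⁵ one at a time, so a closed form is a multiple of e⁶, which is closed because de⁶ = 0. -/

def dOneForm (a : Fin 6 → ℝ) (i j : Fin 6) : ℝ :=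
  ∑ m : Fin 6, a m * dL63 m i j

lemma exists_eq_smul_single_iff {ι R : Type*} [DecidableEq ι] [Semiring R] (a : ι → R) (i : ι) :
    (∃ t : R, a = t • (Pi.single i (1 : R) : ι → R)) ↔ ∀ k, k ≠ i → a k = 0 := by
  constructor
  · rintro ⟨t, rfl⟩ k hk
    simp [hk]
  · intro h
    refine ⟨a i, funext fun k => ?_⟩
    by_cases hk : k = i
    · subst hk
      simp
    · simp [hk, h k hk]

lemma dL63_five (i j : Fin 6) : dL63 5 i j = 0 := by
  simp [dL63]

section evaluations

variable (a : Fin 6 → ℝ)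

lemma dOneForm_one_two : dOneForm a 1 2 = a 0 := by
  simp [dOneForm, dL63, wf]

lemma dOneForm_zero_one : dOneForm a 0 1 = 2 * a 1 := by
  simp [dOneForm, dL63, wf, Fin.sum_univ_six, mul_comm]

lemma dOneForm_zero_two : dOneForm a 0 2 = -2 * a 2 := by
  simp [dOneForm, dL63, wf, Fin.sum_univ_six, mul_comm]

lemma dOneForm_zero_three : dOneForm a 0 3 = a 3 := by
  simp [dOneForm, dL63, wf, Fin.sum_univ_six]

lemma dOneForm_zero_four : dOneForm a 0 4 = -a 4 := by
  simp [dOneForm, dL63, wf, Fin.sum_univ_six]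

end evaluations

lemma dOneForm_eq_zero_iff (a : Fin 6 → ℝ) :
    (∀ i j, dOneForm a i j = 0) ↔ ∀ k, k ≠ 5 → a k = 0 := by
  constructor
  · intro h k hk
    fin_cases k
    · simpa [dOneForm_one_two] using h 1 2
    · simpa [dOneForm_zero_one] using h 0 1
    · simpa [dOneForm_zero_two] using h 0 2
    · simpa [dOneForm_zero_three] using h 0 3
    · simpa [dOneForm_zero_four] using h 0 4
    · exact absurd rfl hk
  · intro h i j
    rw [dOneForm, Fintype.sum_eq_single 5 fun k hk => by rw [h k hk, zero_mul], dL63_five,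
      mul_zero]

/-- The closed 1-forms on L₆,₃ form the one-dimensional space spanned by e⁶:
a 1-form with coefficients a is closed iff it is a multiple of e⁶. -/
theorem L63_closed_one_forms (a : Fin 6 → ℝ) :
    (∀ i j : Fin 6, ∑ m : Fin 6, a m * dL63 m i j = 0) ↔
      ∃ t : ℝ, a = t • (Pi.single (5 : Fin 6) (1:ℝ) : Fin 6 → ℝ) := by
  rw [exists_eq_smul_single_iff]
  exact dOneForm_eq_zero_iff a
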